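/- arXiv:1502.06489 — 3 statements merged into one kernel-verified Lean document; each statement's English description precedes it below -/
import Mathlib

section
/- Every preprojective arc of P_{g,h} can be written in exactly one way as τ^{−r}β_i with r ∈ ℕ and 0 ≤ i ≤ n; explicitly, τ^{−r}β_i = π[(i−g−r)_∂, r_∂′] for 0 ≤ i ≤ g and τ^{−r}β_i = π[(−r)_∂, (i−g+r)_∂′] for g < i ≤ n, and these arcs are pairwise distinct and exhaust the preprojective arcs. -/
/-- Shift the first entry of every point of `A` by `d` (well defined on arcs, since it
commutes with the deck transformations). -/
def shiftFst (d : ℤ) (A : Set (ℤ × ℤ)) : Set (ℤ × ℤ) := (fun p => (p.1 + d, p.2)) '' A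

/-- Shift the second entry of every point of `A` by `d` (well defined on arcs). -/
def shiftSnd (d : ℤ) (A : Set (ℤ × ℤ)) : Set (ℤ × ℤ) := (fun p => (p.1, p.2 + d)) '' A

/-- The bridging arc `π[x_∂, y_∂']` of the annulus `P_{g,h}`, from the outer boundary `∂`
to the inner boundary `∂'`: the orbit of `(x, y) ∈ ℤ × ℤ` under `σ·(x,y) = (x+g, y+h)`. -/
def orbPP (g h x y : ℤ) : Set (ℤ × ℤ) := {q : ℤ × ℤ | ∃ k : ℤ, q = (x + k * g, y + k * h)}

/-- Elementary moves between bridging arcs from `∂` to `∂'`: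
`π[x_∂, y_∂'] → π[(x-1)_∂, y_∂']` and `π[x_∂, y_∂'] → π[x_∂, (y+1)_∂']`. -/
def elemPP (A B : Set (ℤ × ℤ)) : Prop := B = shiftFst (-1) A ∨ B = shiftSnd 1 A

/-- A bridging arc from `∂` to `∂'` is preprojective if it can be reached from
`β_g = π[0_∂, 0_∂']` by a finite (possibly empty) sequence of elementary moves. -/
def IsPreproj (g h : ℤ) (A : Set (ℤ × ℤ)) : Prop :=
  Relation.ReflTransGen elemPP (orbPP g h 0 0) A

/-- The projective arcs: `β_i = π[(i-g)_∂, 0_∂']` for `0 ≤ i ≤ g` and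
`β_i = π[0_∂, (i-g)_∂']` for `g < i ≤ n`. -/
def betaArc (g h i : ℤ) : Set (ℤ × ℤ) :=
  if i ≤ g then orbPP g h (i - g) 0 else orbPP g h 0 (i - g)

/-- The inverse `τ⁻¹` of the translation, acting on bridging arcs from `∂` to `∂'`:
`π[x_∂, y_∂'] ↦ π[(x-1)_∂, (y+1)_∂']`. -/
def tauInvOutIn (A : Set (ℤ × ℤ)) : Set (ℤ × ℤ) := (fun p => (p.1 - 1, p.2 + 1)) '' A

lemma shiftFst_orbPP (g h x y d : ℤ) : shiftFst d (orbPP g h x y) = orbPP g h (x + d) y := by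
  ext ⟨a, b⟩
  simp only [shiftFst, Set.mem_image, orbPP, Set.mem_setOf_eq, Prod.exists, Prod.mk.injEq]
  constructor
  · rintro ⟨p, q, ⟨k, hk1, hk2⟩, h1, h2⟩
    exact ⟨k, by linarith, by linarith⟩
  · rintro ⟨k, h1, h2⟩
    exact ⟨x + k * g, y + k * h, ⟨k, rfl, rfl⟩, by linarith, by linarith⟩

lemma shiftSnd_orbPP (g h x y d : ℤ) : shiftSnd d (orbPP g h x y) = orbPP g h x (y + d) := by
  ext ⟨a, b⟩
  simp only [shiftSnd, Set.mem_image, orbPP, Set.mem_setOf_eq, Prod.exists, Prod.mk.injEq]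
  constructor
  · rintro ⟨p, q, ⟨k, hk1, hk2⟩, h1, h2⟩
    exact ⟨k, by linarith, by linarith⟩
  · rintro ⟨k, h1, h2⟩
    exact ⟨x + k * g, y + k * h, ⟨k, rfl, rfl⟩, by linarith, by linarith⟩

lemma tauInv_orbPP (g h x y : ℤ) : tauInvOutIn (orbPP g h x y) = orbPP g h (x - 1) (y + 1) := by
  ext ⟨a, b⟩
  simp only [tauInvOutIn, Set.mem_image, orbPP, Set.mem_setOf_eq, Prod.exists, Prod.mk.injEq]
  constructor
  · rintro ⟨p, q, ⟨k, hk1, hk2⟩, h1, h2⟩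
    exact ⟨k, by linarith, by linarith⟩
  · rintro ⟨k, h1, h2⟩
    exact ⟨x + k * g, y + k * h, ⟨k, rfl, rfl⟩, by linarith, by linarith⟩

lemma tauInv_iter (g h x y : ℤ) (r : ℕ) :
    tauInvOutIn^[r] (orbPP g h x y) = orbPP g h (x - r) (y + r) := by
  induction r with
  | zero => simp
  | succ r ih =>
    rw [Function.iterate_succ_apply', ih, tauInv_orbPP]
    congr 1 <;> push_cast <;> ring

lemma orbPP_shift (g h x y k : ℤ) : orbPP g h (x + k * g) (y + k * h) = orbPP g h x y := by
  ext ⟨a, b⟩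
  simp only [orbPP, Set.mem_setOf_eq, Prod.mk.injEq]
  constructor
  · rintro ⟨m, ha, hb⟩
    exact ⟨k + m, by rw [ha]; ring, by rw [hb]; ring⟩
  · rintro ⟨m, ha, hb⟩
    exact ⟨m - k, by rw [ha]; ring, by rw [hb]; ring⟩

lemma orbPP_inj (g h : ℤ) (hg : 1 ≤ g) (hh : 1 ≤ h) {x y x' y' : ℤ}
    (hs : -g ≤ x + y) (hs' : x + y ≤ h - 1) (ht : -g ≤ x' + y') (ht' : x' + y' ≤ h - 1)
    (he : orbPP g h x y = orbPP g h x' y') : x = x' ∧ y = y' := by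
  have hm : (x', y') ∈ orbPP g h x y := he ▸ ⟨0, by simp⟩
  obtain ⟨k, hk⟩ := hm
  simp only [Prod.mk.injEq] at hk
  obtain ⟨h1, h2⟩ := hk
  have hk0 : k = 0 := by
    by_contra hne
    rcases lt_or_gt_of_ne hne with hlt | hgt
    · have hk1 : k ≤ -1 := by omega
      have a1 : k * g ≤ -1 * g := mul_le_mul_of_nonneg_right hk1 (by omega)
      have a2 : k * h ≤ -1 * h := mul_le_mul_of_nonneg_right hk1 (by omega)
      linarith
    · have hk1 : (1 : ℤ) ≤ k := hgt
      have a1 : 1 * g ≤ k * g := mul_le_mul_of_nonneg_right hk1 (by omega)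
      have a2 : 1 * h ≤ k * h := mul_le_mul_of_nonneg_right hk1 (by omega)
      linarith
  rw [hk0] at h1 h2
  constructor <;> linarith

lemma isPreproj_nat (g h : ℤ) (a b : ℕ) : IsPreproj g h (orbPP g h (-(a : ℤ)) (b : ℤ)) := by
  induction b with
  | zero =>
    induction a with
    | zero =>
      have : (-(0:ℕ) : ℤ) = 0 := by norm_num
      simp only [Nat.cast_zero, neg_zero]
      exact Relation.ReflTransGen.refl
    | succ a ih =>
      refine ih.tail (Or.inl ?_)
      have e : (-(a : ℤ)) + -1 = -(((a + 1 : ℕ)) : ℤ) := by push_cast; ring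
      rw [shiftFst_orbPP, e]
  | succ b ih =>
    refine ih.tail (Or.inr ?_)
    have e : ((b : ℤ)) + 1 = (((b + 1 : ℕ)) : ℤ) := by push_cast; ring
    rw [shiftSnd_orbPP, e]

lemma isPreproj_of (g h x y : ℤ) (hx : x ≤ 0) (hy : 0 ≤ y) : IsPreproj g h (orbPP g h x y) := by
  have := isPreproj_nat g h (-x).toNat y.toNat
  have e1 : -((-x).toNat : ℤ) = x := by omega
  have e2 : (y.toNat : ℤ) = y := by omega
  rwa [e1, e2] at this

lemma preproj_form (g h : ℤ) {A : Set (ℤ × ℤ)} (hA : IsPreproj g h A) :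
    ∃ x y : ℤ, x ≤ 0 ∧ 0 ≤ y ∧ A = orbPP g h x y := by
  induction hA with
  | refl => exact ⟨0, 0, le_refl _, le_refl _, rfl⟩
  | tail _ hstep ih =>
    obtain ⟨x, y, hx, hy, rfl⟩ := ih
    rcases hstep with h1 | h1
    · exact ⟨x - 1, y, by omega, hy, by rw [h1, shiftFst_orbPP]; congr 1⟩
    · exact ⟨x, y + 1, hx, by omega, by rw [h1, shiftSnd_orbPP]⟩

/-- every preprojective arc of `P_{g,h}` is in exactly one way of the form
`τ^{-r} β_i` with `r ∈ ℕ`, `0 ≤ i ≤ n`; explicitly `τ^{-r} β_i = π[(i-g-r)_∂, r_∂']`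
for `0 ≤ i ≤ g` and `τ^{-r} β_i = π[(-r)_∂, (i-g+r)_∂']` for `g < i ≤ n`; these arcs are
pairwise distinct, preprojective, and exhaust the preprojective arcs. -/
theorem preprojective_unique_form (g h n : ℤ) (hh : 1 ≤ h) (hgh : h ≤ g)
    (hn : n = g + h - 1) :
    (∀ (r : ℕ) (i : ℤ), 0 ≤ i → i ≤ n →
      tauInvOutIn^[r] (betaArc g h i) =
        if i ≤ g then orbPP g h (i - g - (r : ℤ)) (r : ℤ)
        else orbPP g h (-(r : ℤ)) (i - g + (r : ℤ))) ∧
    (∀ (r : ℕ) (i : ℤ), 0 ≤ i → i ≤ n →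
      IsPreproj g h (tauInvOutIn^[r] (betaArc g h i))) ∧
    (∀ (r r' : ℕ) (i i' : ℤ), 0 ≤ i → i ≤ n → 0 ≤ i' → i' ≤ n →
      tauInvOutIn^[r] (betaArc g h i) = tauInvOutIn^[r'] (betaArc g h i') →
      r = r' ∧ i = i') ∧
    (∀ A : Set (ℤ × ℤ), IsPreproj g h A →
      ∃ (r : ℕ) (i : ℤ), 0 ≤ i ∧ i ≤ n ∧ A = tauInvOutIn^[r] (betaArc g h i)) := by
  have hg : 1 ≤ g := le_trans hh hgh
  have part1 : ∀ (r : ℕ) (i : ℤ), 0 ≤ i → i ≤ n →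
      tauInvOutIn^[r] (betaArc g h i) =
        if i ≤ g then orbPP g h (i - g - (r : ℤ)) (r : ℤ)
        else orbPP g h (-(r : ℤ)) (i - g + (r : ℤ)) := by
    intro r i _ _
    by_cases hig : i ≤ g
    · rw [if_pos hig]
      unfold betaArc
      rw [if_pos hig, tauInv_iter, zero_add]
    · rw [if_neg hig]
      unfold betaArc
      rw [if_neg hig, tauInv_iter, zero_sub]
  refine ⟨part1, ?_, ?_, ?_⟩
  · -- preprojectivity
    intro r i hi0 hin
    rw [part1 r i hi0 hin]
    by_cases hig : i ≤ g
    · rw [if_pos hig]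
      exact isPreproj_of g h _ _ (by omega) (by omega)
    · rw [if_neg hig]
      exact isPreproj_of g h _ _ (by omega) (by omega)
  · -- uniqueness
    intro r r' i i' hi0 hin hi0' hin' heq
    rw [part1 r i hi0 hin, part1 r' i' hi0' hin'] at heq
    by_cases hig : i ≤ g <;> by_cases hig' : i' ≤ g
    · rw [if_pos hig, if_pos hig'] at heq
      obtain ⟨e1, e2⟩ := orbPP_inj g h hg hh (by omega) (by omega) (by omega) (by omega) heq
      constructor <;> omega
    · rw [if_pos hig, if_neg hig'] at heq
      obtain ⟨e1, e2⟩ := orbPP_inj g h hg hh (by omega) (by omega) (by omega) (by omega) heq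
      constructor <;> omega
    · rw [if_neg hig, if_pos hig'] at heq
      obtain ⟨e1, e2⟩ := orbPP_inj g h hg hh (by omega) (by omega) (by omega) (by omega) heq
      constructor <;> omega
    · rw [if_neg hig, if_neg hig'] at heq
      obtain ⟨e1, e2⟩ := orbPP_inj g h hg hh (by omega) (by omega) (by omega) (by omega) heq
      constructor <;> omega
  · -- exhaustion
    intro A hA
    obtain ⟨x, y, hx, hy, rfl⟩ := preproj_form g h hA
    set N : ℤ := g + h with hN
    have hNpos : 0 < N := by omega
    set k : ℤ := -((x + y + g) / N) with hkdef
    set x' : ℤ := x + k * g with hx'def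
    set y' : ℤ := y + k * h with hy'def
    have hmod1 : 0 ≤ (x + y + g) % N := Int.emod_nonneg _ (ne_of_gt hNpos)
    have hmod2 : (x + y + g) % N < N := Int.emod_lt_of_pos _ hNpos
    have hsum : x' + y' = (x + y + g) % N - g := by
      have := Int.emod_def (x + y + g) N
      rw [hx'def, hy'def, hkdef, hN]
      rw [hN] at this
      linarith [this, mul_comm (g + h) ((x + y + g) / (g + h))]
    have hmain : orbPP g h x y = orbPP g h x' y' := (orbPP_shift g h x y k).symm
    have hsl : -g ≤ x' + y' := by omega
    have hsu : x' + y' ≤ h - 1 := by omega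
    by_cases hcase : x' + y' ≤ 0
    · -- type 1
      have hy' : 0 ≤ y' := by
        rcases le_or_gt 0 k with hk | hk
        · have : 0 ≤ k * h := mul_nonneg hk (by omega)
          rw [hy'def]; linarith
        · have hk1 : k ≤ -1 := by omega
          have a1 : k * g ≤ -1 * g := mul_le_mul_of_nonneg_right hk1 (by omega)
          have hxb : x' ≤ -g := by rw [hx'def]; linarith
          omega
      refine ⟨y'.toNat, x' + y' + g, by omega, by omega, ?_⟩
      rw [part1 y'.toNat (x' + y' + g) (by omega) (by omega), if_pos (by omega : x' + y' + g ≤ g)]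
      rw [hmain, Int.toNat_of_nonneg hy']
      have e1 : x' + y' + g - g - y' = x' := by ring
      rw [e1]
    · -- type 2
      have hx' : x' ≤ 0 := by
        rcases le_or_gt k 0 with hk | hk
        · have : k * g ≤ 0 := mul_nonpos_of_nonpos_of_nonneg (by omega) (by omega)
          rw [hx'def]; linarith
        · have hk1 : (1 : ℤ) ≤ k := hk
          have a2 : 1 * h ≤ k * h := mul_le_mul_of_nonneg_right hk1 (by omega)
          have hyb : h ≤ y' := by rw [hy'def]; linarith
          omega
      refine ⟨(-x').toNat, x' + y' + g, by omega, by omega, ?_⟩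
      rw [part1 (-x').toNat (x' + y' + g) (by omega) (by omega),
        if_neg (by omega : ¬ x' + y' + g ≤ g)]
      rw [hmain, Int.toNat_of_nonneg (by omega : (0:ℤ) ≤ -x'), neg_neg]
      have e2 : x' + y' + g - g + -x' = y' := by ring
      rw [e2]
end

section
/- Every preinjective arc of P_{g,h} can be written in exactly one way as τ^{r}γ_i with r ∈ ℕ and 0 ≤ i ≤ n; explicitly, τ^{r}γ_i = π[(−2−r)_∂′, (i−g+2+r)_∂] for 0 ≤ i ≤ g and τ^{r}γ_i = π[(i−g−2−r)_∂′, (2+r)_∂] for g < i ≤ n, and these arcs are pairwise distinct and exhaust the preinjective arcs. -/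
/-- The bridging arc `π[j_∂', x_∂]` of the annulus `P_{g,h}`, from the inner boundary `∂'`
to the outer boundary `∂`: the orbit of `(j, x) ∈ ℤ × ℤ` under `σ·(j,x) = (j+h, x+g)`. -/
def orbPI (g h j x : ℤ) : Set (ℤ × ℤ) := {q : ℤ × ℤ | ∃ k : ℤ, q = (j + k * h, x + k * g)}

/-- Elementary moves between bridging arcs from `∂'` to `∂`:
`π[j_∂', x_∂] → π[(j+1)_∂', x_∂]` and `π[j_∂', x_∂] → π[j_∂', (x-1)_∂]`. -/
def elemPI (A B : Set (ℤ × ℤ)) : Prop := B = shiftFst 1 A ∨ B = shiftSnd (-1) A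

/-- The injective arcs: `γ_i = π[(-2)_∂', (i-g+2)_∂]` for `0 ≤ i ≤ g` and
`γ_i = π[(i-g-2)_∂', 2_∂]` for `g < i ≤ n`. -/
def gammaArc (g h i : ℤ) : Set (ℤ × ℤ) :=
  if i ≤ g then orbPI g h (-2) (i - g + 2) else orbPI g h (i - g - 2) 2

/-- A bridging arc from `∂'` to `∂` is preinjective if `γ_0` can be reached from it by a
finite (possibly empty) sequence of elementary moves. -/
def IsPreinj (g h : ℤ) (A : Set (ℤ × ℤ)) : Prop :=
  Relation.ReflTransGen elemPI A (gammaArc g h 0)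

/-- The translation `τ`, acting on bridging arcs from `∂'` to `∂`:
`π[j_∂', x_∂] ↦ π[(j-1)_∂', (x+1)_∂]`. -/
def tauInOut (A : Set (ℤ × ℤ)) : Set (ℤ × ℤ) := (fun p => (p.1 - 1, p.2 + 1)) '' A


lemma orb_shift (g h j x k : ℤ) : orbPI g h (j + k * h) (x + k * g) = orbPI g h j x := by
  ext q
  constructor
  · rintro ⟨m, rfl⟩
    exact ⟨k + m, Prod.ext_iff.mpr ⟨by ring, by ring⟩⟩
  · rintro ⟨m, rfl⟩
    exact ⟨m - k, Prod.ext_iff.mpr ⟨by ring, by ring⟩⟩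

lemma mem_orb (g h j x : ℤ) : (j, x) ∈ orbPI g h j x := ⟨0, by simp⟩

lemma orb_eq (g h j x j' x' : ℤ) (hE : orbPI g h j x = orbPI g h j' x') :
    ∃ k : ℤ, j' = j + k * h ∧ x' = x + k * g := by
  have hm : (j', x') ∈ orbPI g h j x := hE ▸ mem_orb g h j' x'
  obtain ⟨k, hk⟩ := hm
  exact ⟨k, congrArg Prod.fst hk, congrArg Prod.snd hk⟩

lemma shiftFst_orb (d g h j x : ℤ) : shiftFst d (orbPI g h j x) = orbPI g h (j + d) x := by
  ext q
  constructor
  · rintro ⟨p, ⟨k, rfl⟩, rfl⟩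
    exact ⟨k, Prod.ext_iff.mpr ⟨by ring, by ring⟩⟩
  · rintro ⟨k, rfl⟩
    exact ⟨(j + k * h, x + k * g), ⟨k, rfl⟩, Prod.ext_iff.mpr ⟨by ring, by ring⟩⟩

lemma shiftSnd_orb (d g h j x : ℤ) : shiftSnd d (orbPI g h j x) = orbPI g h j (x + d) := by
  ext q
  constructor
  · rintro ⟨p, ⟨k, rfl⟩, rfl⟩
    exact ⟨k, Prod.ext_iff.mpr ⟨by ring, by ring⟩⟩
  · rintro ⟨k, rfl⟩
    exact ⟨(j + k * h, x + k * g), ⟨k, rfl⟩, Prod.ext_iff.mpr ⟨by ring, by ring⟩⟩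

lemma tau_orb (g h j x : ℤ) : tauInOut (orbPI g h j x) = orbPI g h (j - 1) (x + 1) := by
  ext q
  constructor
  · rintro ⟨p, ⟨k, rfl⟩, rfl⟩
    exact ⟨k, Prod.ext_iff.mpr ⟨by ring, by ring⟩⟩
  · rintro ⟨k, rfl⟩
    exact ⟨(j + k * h, x + k * g), ⟨k, rfl⟩, Prod.ext_iff.mpr ⟨by ring, by ring⟩⟩

lemma tau_iter (g h j x : ℤ) (r : ℕ) :
    tauInOut^[r] (orbPI g h j x) = orbPI g h (j - r) (x + r) := by
  induction r generalizing j x with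
  | zero => simp
  | succ m ih =>
    rw [Function.iterate_succ_apply, tau_orb, ih]
    congr 1 <;> push_cast <;> ring

lemma shiftFst_cancel (A : Set (ℤ × ℤ)) : shiftFst (-1) (shiftFst 1 A) = A := by
  simp [shiftFst, Set.image_image]

lemma shiftSnd_cancel (A : Set (ℤ × ℤ)) : shiftSnd 1 (shiftSnd (-1) A) = A := by
  simp [shiftSnd, Set.image_image]

lemma reachA (g h j x : ℤ) (a : ℕ) :
    Relation.ReflTransGen elemPI (orbPI g h j x) (orbPI g h (j + a) x) := by
  induction a with
  | zero => simpa using Relation.ReflTransGen.refl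
  | succ m ih =>
    refine ih.tail (Or.inl ?_)
    rw [shiftFst_orb]
    congr 1
    push_cast; ring

lemma reachB (g h j x : ℤ) (b : ℕ) :
    Relation.ReflTransGen elemPI (orbPI g h j x) (orbPI g h j (x - b)) := by
  induction b with
  | zero => simpa using Relation.ReflTransGen.refl
  | succ m ih =>
    refine ih.tail (Or.inr ?_)
    rw [shiftSnd_orb]
    congr 1
    push_cast; ring

lemma reach (g h j x a b : ℤ) (ha : 0 ≤ a) (hb : 0 ≤ b) :
    Relation.ReflTransGen elemPI (orbPI g h j x) (orbPI g h (j + a) (x - b)) := by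
  obtain ⟨a', rfl⟩ := Int.eq_ofNat_of_zero_le ha
  obtain ⟨b', rfl⟩ := Int.eq_ofNat_of_zero_le hb
  exact (reachA g h j x a').trans (reachB g h (j + a') x b')

lemma isPreinj_orb (g h : ℤ) (hg : 0 ≤ g) (j x k : ℤ)
    (h1 : j + k * h ≤ -2) (h2 : 2 - g ≤ x + k * g) : IsPreinj g h (orbPI g h j x) := by
  unfold IsPreinj
  rw [gammaArc, if_pos hg, ← orb_shift g h j x k]
  have := reach g h (j + k * h) (x + k * g) (-2 - (j + k * h)) ((x + k * g) - (0 - g + 2))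
    (by linarith) (by linarith)
  convert this using 2 <;> ring

lemma preinj_rep (g h : ℤ) (hg : 0 ≤ g) (A : Set (ℤ × ℤ)) (hA : IsPreinj g h A) :
    ∃ j x k : ℤ, A = orbPI g h j x ∧ j + k * h ≤ -2 ∧ 2 - g ≤ x + k * g := by
  unfold IsPreinj at hA
  induction hA using Relation.ReflTransGen.head_induction_on with
  | refl =>
    refine ⟨-2, 0 - g + 2, 0, ?_, by linarith, by linarith⟩
    rw [gammaArc, if_pos hg]
  | @head A' C hAB _ ih =>
    obtain ⟨j, x, k, hB, h1, h2⟩ := ih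
    rcases hAB with hB' | hB'
    · refine ⟨j - 1, x, k, ?_, by linarith, h2⟩
      have h3 : shiftFst (-1) (orbPI g h j x) = A' := by
        rw [← hB, hB', shiftFst_cancel]
      rw [← h3, shiftFst_orb]
      congr 1
    · refine ⟨j, x + 1, k, ?_, h1, by linarith⟩
      have h3 : shiftSnd 1 (orbPI g h j x) = A' := by
        rw [← hB, hB', shiftSnd_cancel]
      rw [← h3, shiftSnd_orb]

lemma k_eq_zero {k m : ℤ} (hm : 0 < m) (h1 : -m < k * m) (h2 : k * m < m) : k = 0 := by
  rcases lt_trichotomy k 0 with hk | hk | hk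
  · have : k ≤ -1 := by omega
    nlinarith
  · exact hk
  · have : 1 ≤ k := hk
    nlinarith

/-- every preinjective arc of `P_{g,h}` is in exactly one way of the form
`τ^r γ_i` with `r ∈ ℕ`, `0 ≤ i ≤ n`; explicitly `τ^r γ_i = π[(-2-r)_∂', (i-g+2+r)_∂]`
for `0 ≤ i ≤ g` and `τ^r γ_i = π[(i-g-2-r)_∂', (2+r)_∂]` for `g < i ≤ n`; these arcs are
pairwise distinct, preinjective, and exhaust the preinjective arcs. -/
theorem preinjective_unique_form (g h n : ℤ) (hh : 1 ≤ h) (hgh : h ≤ g)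
    (hn : n = g + h - 1) :
    (∀ (r : ℕ) (i : ℤ), 0 ≤ i → i ≤ n →
      tauInOut^[r] (gammaArc g h i) =
        if i ≤ g then orbPI g h (-2 - (r : ℤ)) (i - g + 2 + (r : ℤ))
        else orbPI g h (i - g - 2 - (r : ℤ)) (2 + (r : ℤ))) ∧
    (∀ (r : ℕ) (i : ℤ), 0 ≤ i → i ≤ n →
      IsPreinj g h (tauInOut^[r] (gammaArc g h i))) ∧
    (∀ (r r' : ℕ) (i i' : ℤ), 0 ≤ i → i ≤ n → 0 ≤ i' → i' ≤ n →
      tauInOut^[r] (gammaArc g h i) = tauInOut^[r'] (gammaArc g h i') →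
      r = r' ∧ i = i') ∧
    (∀ A : Set (ℤ × ℤ), IsPreinj g h A →
      ∃ (r : ℕ) (i : ℤ), 0 ≤ i ∧ i ≤ n ∧ A = tauInOut^[r] (gammaArc g h i)) := by
  have hg : (1:ℤ) ≤ g := le_trans hh hgh
  have part1 : ∀ (r : ℕ) (i : ℤ), 0 ≤ i → i ≤ n →
      tauInOut^[r] (gammaArc g h i) =
        if i ≤ g then orbPI g h (-2 - (r : ℤ)) (i - g + 2 + (r : ℤ))
        else orbPI g h (i - g - 2 - (r : ℤ)) (2 + (r : ℤ)) := by
    intro r i _ _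
    by_cases hig : i ≤ g
    · rw [gammaArc, if_pos hig, if_pos hig, tau_iter]
    · rw [gammaArc, if_neg hig, if_neg hig, tau_iter]
  refine ⟨part1, ?_, ?_, ?_⟩
  · -- preinjectivity
    intro r i hi0 hin
    rw [part1 r i hi0 hin]
    by_cases hig : i ≤ g
    · rw [if_pos hig]
      refine isPreinj_orb g h (by linarith) _ _ 0 ?_ ?_
      · rw [zero_mul, add_zero]; omega
      · rw [zero_mul, add_zero]; omega
    · rw [if_neg hig]
      refine isPreinj_orb g h (by linarith) _ _ (-1) ?_ ?_
      · have : (-1 : ℤ) * h = -h := by ring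
        rw [this]; omega
      · have : (-1 : ℤ) * g = -g := by ring
        rw [this]; omega
  · -- uniqueness
    intro r r' i i' hi0 hin hi0' hin' heq
    rw [part1 r i hi0 hin, part1 r' i' hi0' hin'] at heq
    have hgh0 : (0:ℤ) < g + h := by linarith
    by_cases hig : i ≤ g
    · rw [if_pos hig] at heq
      by_cases hig' : i' ≤ g
      · rw [if_pos hig'] at heq
        obtain ⟨k, hk1, hk2⟩ := orb_eq _ _ _ _ _ _ heq
        have hkm : k * (g + h) = i' - i := by linear_combination -hk1 - hk2
        have hk0 : k = 0 := k_eq_zero hgh0 (by linarith) (by linarith)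
        rw [hk0, zero_mul, add_zero] at hk1 hk2
        constructor <;> omega
      · rw [if_neg hig'] at heq
        obtain ⟨k, hk1, hk2⟩ := orb_eq _ _ _ _ _ _ heq
        have hkm : k * (g + h) = i' - i := by linear_combination -hk1 - hk2
        have hk0 : k = 0 := k_eq_zero hgh0 (by linarith) (by linarith)
        rw [hk0, zero_mul] at hkm
        omega
    · rw [if_neg hig] at heq
      by_cases hig' : i' ≤ g
      · rw [if_pos hig'] at heq
        obtain ⟨k, hk1, hk2⟩ := orb_eq _ _ _ _ _ _ heq
        have hkm : k * (g + h) = i' - i := by linear_combination -hk1 - hk2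
        have hk0 : k = 0 := k_eq_zero hgh0 (by linarith) (by linarith)
        rw [hk0, zero_mul] at hkm
        omega
      · rw [if_neg hig'] at heq
        obtain ⟨k, hk1, hk2⟩ := orb_eq _ _ _ _ _ _ heq
        have hkm : k * (g + h) = i' - i := by linear_combination -hk1 - hk2
        have hk0 : k = 0 := k_eq_zero hgh0 (by linarith) (by linarith)
        rw [hk0, zero_mul, add_zero] at hk1 hk2
        constructor <;> omega
  · -- exhaustion
    intro A hA
    obtain ⟨j, x, k, hAorb, h1, h2⟩ := preinj_rep g h (by linarith) A hA
    have hgh0 : (0:ℤ) < g + h := by linarith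
    obtain ⟨q, t, hqt, ht0, ht1⟩ :
        ∃ q t : ℤ, (j + k * h) + (x + k * g) + g = (g + h) * q + t ∧ 0 ≤ t ∧ t < g + h :=
      ⟨((j + k * h) + (x + k * g) + g) / (g + h), ((j + k * h) + (x + k * g) + g) % (g + h),
        (Int.mul_ediv_add_emod _ _).symm, Int.emod_nonneg _ (by omega), Int.emod_lt_of_pos _ hgh0⟩
    obtain ⟨J, hJ⟩ : ∃ J : ℤ, J = j + k * h - q * h := ⟨_, rfl⟩
    obtain ⟨X, hX⟩ : ∃ X : ℤ, X = x + k * g - q * g := ⟨_, rfl⟩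
    have hS : J + X = t - g := by linear_combination hJ + hX + hqt
    have hA1 : 0 ≤ q → J ≤ -2 := by
      intro hq0
      have hqh : 0 ≤ q * h := mul_nonneg hq0 (by linarith)
      linarith [hJ, h1]
    have hA2 : q ≤ -1 → 2 ≤ X := by
      intro hq1
      have hqg : g ≤ (-q) * g := le_mul_of_one_le_left (by linarith) (by linarith)
      have : (-q) * g = -(q * g) := by ring
      linarith [hX, h2]
    have hq : 0 ≤ q ∨ q ≤ -1 := by omega
    by_cases hScase : t ≤ g
    · -- i = t ≤ g
      have hJle : J ≤ -2 := by
        rcases hq with hq0 | hq1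
        · exact hA1 hq0
        · have := hA2 hq1; linarith
      refine ⟨(-2 - J).toNat, t, ht0, by omega, ?_⟩
      rw [part1 _ t ht0 (by omega), if_pos hScase]
      have hr : (((-2 - J).toNat : ℤ)) = -2 - J := Int.toNat_of_nonneg (by omega)
      have e1 : j + k * h + (-q) * h = -2 - (((-2 - J).toNat : ℤ)) := by
        rw [hr]; linear_combination -hJ
      have e2 : x + k * g + (-q) * g = t - g + 2 + (((-2 - J).toNat : ℤ)) := by
        rw [hr]; linear_combination hqt + hJ
      rw [hAorb, ← orb_shift g h j x k, ← orb_shift g h (j + k * h) (x + k * g) (-q), e1, e2]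
    · -- i = t > g
      have hXge : 2 ≤ X := by
        rcases hq with hq0 | hq1
        · have := hA1 hq0; linarith
        · exact hA2 hq1
      refine ⟨(X - 2).toNat, t, ht0, by omega, ?_⟩
      rw [part1 _ t ht0 (by omega), if_neg (by omega)]
      have hr : (((X - 2).toNat : ℤ)) = X - 2 := Int.toNat_of_nonneg (by omega)
      have e1 : j + k * h + (-q) * h = t - g - 2 - (((X - 2).toNat : ℤ)) := by
        rw [hr]; linear_combination hqt + hX
      have e2 : x + k * g + (-q) * g = 2 + (((X - 2).toNat : ℤ)) := by
        rw [hr]; linear_combination -hX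
      rw [hAorb, ← orb_shift g h j x k, ← orb_shift g h (j + k * h) (x + k * g) (-q), e1, e2]
end

section
/- Let Q^∞ be the quiver with vertex set ℕ × {0,…,h−1} and, for each r ∈ ℕ and 0 ≤ s ≤ h−1, an arrow ρ(r,s): (r, s) → (r+1, s) and an arrow π(r,s): (r+1, s⊖1) → (r, s), where s⊖1 denotes s−1 if s > 0 and h−1 if s = 0. Then the assignment F(π[i_∂′, j_∂′]) = (j−i−2, s), where s ∈ {0,…,h−1} is the unique element with s ≡ i (mod h), is a well-defined bijection from the set of peripheral arcs at the inner boundary of P_{g,h} onto ℕ × {0,…,h−1}, and for any two peripheral arcs α, α′ at ∂′ the elementary moves from α to α′ are in bijection with the arrows from F(α) to F(α′) in Q^∞; that is, F is an isomorphism from the quiver of peripheral arcs at ∂′ with elementary moves onto the tube quiver Q^∞ of rank h. -/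
/-- The peripheral arc `π[i, j]` with period `c` (`c = g` at the outer boundary `∂`,
`c = h` at the inner boundary `∂'`): the orbit of `(i, j) ∈ ℤ × ℤ` (with `j ≥ i + 2`)
under the shift `σ·(i,j) = (i+c, j+c)`. -/
def orbPer (c i j : ℤ) : Set (ℤ × ℤ) := {q : ℤ × ℤ | ∃ k : ℤ, q = (i + k * c, j + k * c)}

/-- Peripheral arcs at the inner boundary `∂'` of `P_{g,h}`. -/
def IsPerIn (h : ℤ) (A : Set (ℤ × ℤ)) : Prop := ∃ i j : ℤ, i + 2 ≤ j ∧ A = orbPer h i j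

open Classical in
/-- The number of elementary moves from the peripheral arc `A` at `∂'` to the arc `B`:
the lengthening move `π[i_∂', j_∂'] → π[i_∂', (j+1)_∂']` always exists, the shortening
move `π[i_∂', j_∂'] → π[(i+1)_∂', j_∂']` only when its target is still a peripheral arc. -/
noncomputable def perInMoveCount (h : ℤ) (A B : Set (ℤ × ℤ)) : ℕ :=
  (if B = shiftSnd 1 A then 1 else 0) +
  (if IsPerIn h (shiftFst 1 A) ∧ B = shiftFst 1 A then 1 else 0)

open Classical in
/-- The number of arrows from `v` to `w` in the tube quiver `Q^∞` of rank `h`, with vertex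
set `ℕ × {0,…,h-1}` and arrows `ρ(r,s) : (r,s) → (r+1,s)` and `π(r,s) : (r+1, s⊖1) → (r,s)`,
where `s⊖1 = s-1` if `s > 0` and `= h-1` if `s = 0`. -/
noncomputable def qInfCount (h : ℤ) (v w : ℤ × ℤ) : ℕ :=
  (if w.1 = v.1 + 1 ∧ 0 ≤ v.1 ∧ w.2 = v.2 ∧ 0 ≤ v.2 ∧ v.2 ≤ h - 1 then 1 else 0) +
  (if v.1 = w.1 + 1 ∧ 0 ≤ w.1 ∧ 0 ≤ w.2 ∧ w.2 ≤ h - 1 ∧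
      v.2 = (if 0 < w.2 then w.2 - 1 else h - 1) then 1 else 0)

lemma mem_orbPer (c i j : ℤ) : (i, j) ∈ orbPer c i j := ⟨0, by simp⟩

lemma orbPer_eq_iff (c i j i' j' : ℤ) :
    orbPer c i j = orbPer c i' j' ↔ ∃ k : ℤ, i' = i + k * c ∧ j' = j + k * c := by
  constructor
  · intro hEq
    have : (i', j') ∈ orbPer c i j := hEq ▸ mem_orbPer c i' j'
    obtain ⟨k, hk⟩ := this
    exact ⟨k, by simpa [Prod.ext_iff] using hk⟩
  · rintro ⟨k, rfl, rfl⟩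
    ext q
    constructor
    · rintro ⟨m, rfl⟩
      exact ⟨m - k, by simp [Prod.ext_iff]; constructor <;> ring⟩
    · rintro ⟨m, rfl⟩
      exact ⟨m + k, by simp [Prod.ext_iff]; constructor <;> ring⟩

lemma shiftFst_orbPer (d c i j : ℤ) : shiftFst d (orbPer c i j) = orbPer c (i + d) j := by
  ext q
  simp only [shiftFst, Set.mem_image, orbPer, Set.mem_setOf_eq]
  constructor
  · rintro ⟨p, ⟨k, rfl⟩, rfl⟩
    exact ⟨k, by simp [Prod.ext_iff]; ring⟩
  · rintro ⟨k, rfl⟩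
    exact ⟨(i + k * c, j + k * c), ⟨k, rfl⟩, by simp [Prod.ext_iff]; ring⟩

lemma shiftSnd_orbPer (d c i j : ℤ) : shiftSnd d (orbPer c i j) = orbPer c i (j + d) := by
  ext q
  simp only [shiftSnd, Set.mem_image, orbPer, Set.mem_setOf_eq]
  constructor
  · rintro ⟨p, ⟨k, rfl⟩, rfl⟩
    exact ⟨k, by simp [Prod.ext_iff]; ring⟩
  · rintro ⟨k, rfl⟩
    exact ⟨(i + k * c, j + k * c), ⟨k, rfl⟩, by simp [Prod.ext_iff]; ring⟩

lemma isPerIn_orbPer (h i j : ℤ) : IsPerIn h (orbPer h i j) ↔ i + 2 ≤ j := by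
  constructor
  · rintro ⟨i', j', hij, heq⟩
    obtain ⟨k, hk1, hk2⟩ := (orbPer_eq_iff h i' j' i j).mp heq.symm
    linarith
  · intro hij
    exact ⟨i, j, hij, rfl⟩

lemma k_zero (h k : ℤ) (hh : 1 ≤ h) (h1 : -h < k * h) (h2 : k * h < h) : k = 0 := by
  by_contra hc
  rcases lt_or_ge k 0 with hk | hk
  · have : k ≤ -1 := by omega
    nlinarith
  · have : 1 ≤ k := by omega
    nlinarith

lemma k_mem (h k : ℤ) (hh : 1 ≤ h) (h1 : -h ≤ k * h) (h2 : k * h < h) : k = -1 ∨ k = 0 := by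
  by_contra hc
  push_neg at hc
  rcases lt_or_ge k (-1) with hk | hk
  · nlinarith
  · have : 1 ≤ k := by omega
    nlinarith

/-- the map `F(π[i_∂', j_∂']) = (j-i-2, s)` with `0 ≤ s ≤ h-1`,
`s ≡ i (mod h)`, is a well-defined bijection from the peripheral arcs at the inner
boundary of `P_{g,h}` onto `ℕ × {0,…,h-1}` matching elementary moves with the arrows of
the tube quiver `Q^∞` of rank `h`.  Equivalently the inverse parametrization
`(r,s) ↦ π[s_∂', (s+r+2)_∂']` is a bijection matching the arrow counts, and `F` is given
by the stated formula. -/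
theorem tube_inner_iso (g h : ℤ) (hh : 1 ≤ h) (hgh : h ≤ g) :
    Set.BijOn (fun p : ℤ × ℤ => orbPer h p.2 (p.2 + p.1 + 2))
      {p : ℤ × ℤ | 0 ≤ p.1 ∧ 0 ≤ p.2 ∧ p.2 ≤ h - 1} {A | IsPerIn h A} ∧
    (∀ i j s : ℤ, i + 2 ≤ j → 0 ≤ s → s ≤ h - 1 → h ∣ i - s →
      orbPer h i j = orbPer h s (s + (j - i - 2) + 2)) ∧
    (∀ p ∈ {p : ℤ × ℤ | 0 ≤ p.1 ∧ 0 ≤ p.2 ∧ p.2 ≤ h - 1},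
     ∀ q ∈ {p : ℤ × ℤ | 0 ≤ p.1 ∧ 0 ≤ p.2 ∧ p.2 ≤ h - 1},
      perInMoveCount h (orbPer h p.2 (p.2 + p.1 + 2)) (orbPer h q.2 (q.2 + q.1 + 2))
        = qInfCount h p q) := by
  refine ⟨⟨?_, ?_, ?_⟩, ?_, ?_⟩
  · -- MapsTo
    rintro ⟨r, s⟩ ⟨hr, hs0, hs1⟩
    exact ⟨s, s + r + 2, by linarith, rfl⟩
  · -- InjOn
    rintro ⟨r, s⟩ ⟨hr, hs0, hs1⟩ ⟨r', s'⟩ ⟨hr', hs0', hs1'⟩ heq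
    dsimp only at heq hr hs0 hs1 hr' hs0' hs1'
    obtain ⟨k, h1, h2⟩ := (orbPer_eq_iff h s (s + r + 2) s' (s' + r' + 2)).mp heq
    have hk0 : k = 0 := k_zero h k hh (by linarith) (by linarith)
    subst hk0
    simp only [zero_mul, add_zero] at h1 h2
    have : r' = r := by omega
    simp [Prod.ext_iff, this, h1]
  · -- SurjOn
    rintro A ⟨i, j, hij, rfl⟩
    have hpos : 0 < h := by omega
    have hmod0 : 0 ≤ i % h := Int.emod_nonneg i (by omega)
    have hmod1 : i % h < h := Int.emod_lt_of_pos i hpos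
    refine ⟨(j - i - 2, i % h), ⟨by dsimp; omega, by dsimp; omega, by dsimp; omega⟩, ?_⟩
    dsimp only
    rw [orbPer_eq_iff]
    have hdiv : i % h + h * (i / h) = i := Int.emod_add_mul_ediv i h
    have hc : h * (i / h) = (i / h) * h := mul_comm _ _
    exact ⟨i / h, by linarith, by linarith⟩
  · -- formula for F
    intro i j s hij hs0 hs1 hdvd
    obtain ⟨k, hk⟩ := hdvd
    rw [orbPer_eq_iff]
    have hc : h * k = k * h := mul_comm _ _
    exact ⟨-k, by rw [neg_mul]; linarith, by rw [neg_mul]; linarith⟩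
  · -- move counts
    rintro ⟨r, s⟩ ⟨hr, hs0, hs1⟩ ⟨r', s'⟩ ⟨hr', hs0', hs1'⟩
    dsimp only at hr hs0 hs1 hr' hs0' hs1' ⊢
    have e1 : (orbPer h s' (s' + r' + 2) = shiftSnd 1 (orbPer h s (s + r + 2))) ↔
        (r' = r + 1 ∧ 0 ≤ r ∧ s' = s ∧ 0 ≤ s ∧ s ≤ h - 1) := by
      rw [shiftSnd_orbPer, eq_comm, orbPer_eq_iff]
      constructor
      · rintro ⟨k, h1, h2⟩
        have hk0 : k = 0 := k_zero h k hh (by linarith) (by linarith)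
        subst hk0
        simp only [zero_mul, add_zero] at h1 h2
        exact ⟨by omega, hr, by omega, hs0, hs1⟩
      · rintro ⟨h1, _, h2, _, _⟩
        exact ⟨0, by omega, by omega⟩
    have e2 : (IsPerIn h (shiftFst 1 (orbPer h s (s + r + 2))) ∧
          orbPer h s' (s' + r' + 2) = shiftFst 1 (orbPer h s (s + r + 2))) ↔
        (r = r' + 1 ∧ 0 ≤ r' ∧ 0 ≤ s' ∧ s' ≤ h - 1 ∧
          s = (if 0 < s' then s' - 1 else h - 1)) := by
      rw [shiftFst_orbPer, isPerIn_orbPer, eq_comm, orbPer_eq_iff]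
      constructor
      · rintro ⟨hpe, k, h1, h2⟩
        have hk0 : k = -1 ∨ k = 0 := k_mem h k hh (by linarith) (by linarith)
        rcases hk0 with rfl | rfl
        · simp only [neg_one_mul] at h1 h2
          refine ⟨by omega, by omega, hs0', hs1', ?_⟩
          split_ifs with hpos
          · omega
          · omega
        · simp only [zero_mul, add_zero] at h1 h2
          refine ⟨by omega, by omega, hs0', hs1', ?_⟩
          split_ifs with hpos
          · omega
          · omega
      · rintro ⟨h1, h2, _, _, h5⟩
        split_ifs at h5 with hpos
        · refine ⟨by omega, 0, by simp; omega, by simp; omega⟩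
        · refine ⟨by omega, -1, by rw [neg_one_mul]; omega, by rw [neg_one_mul]; omega⟩
    unfold perInMoveCount qInfCount
    dsimp only
    simp only [e1, e2]
end
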